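/- arXiv:2407.15368 — 8 statements merged into one kernel-verified Lean document; each statement's English description precedes it below -/
import Mathlib

section
/- Let (Ω, 𝔉, P) be a probability space, X ⊆ ℝⁿ a convex set, c > 0, and F : X × Ω → ℝ such that for P-almost every ω the map x ↦ F(x, ω) is convex on X, and F(x, ·) is square-integrable for every x ∈ X. Then the function φ(x, y, z) := (c/z)·E[(F(x, ·) − y)₊²] + y + (c/4)·z is jointly convex on X × ℝ × (0, ∞). -/
open MeasureTheory

/-!
Pointwise in `ω`, `(x, y) ↦ (F(x, ω) − y)₊` is convex and nonnegative, and the perspective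
`(u, z) ↦ u² / z` of the square is convex on `ℝ × (0, ∞)` and nondecreasing in `u ≥ 0`, so
`(x, y, z) ↦ (F(x, ω) − y)₊² / z` is jointly convex. Convexity survives integration in `ω`,
and the remaining terms are linear.
-/

/-- The perspective inequality for the square: the gap is `a b (u y − v x)² / (x y (a x + b y))`.
-/
theorem mul_add_mul_sq_div_le {a b u v x y : ℝ} (ha : 0 ≤ a) (hb : 0 ≤ b) (hx : 0 < x)
    (hy : 0 < y) : (a * u + b * v) ^ 2 / (a * x + b * y) ≤ a * (u ^ 2 / x) + b * (v ^ 2 / y) := by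
  have hrhs : 0 ≤ a * (u ^ 2 / x) + b * (v ^ 2 / y) := by positivity
  rcases (by positivity : 0 ≤ a * x + b * y).eq_or_lt with h | h
  · rwa [← h, div_zero]
  have hrhs_eq : a * (u ^ 2 / x) + b * (v ^ 2 / y) = (a * u ^ 2 * y + b * v ^ 2 * x) / (x * y) := by
    field_simp
  rw [div_le_iff₀ h, hrhs_eq, div_mul_eq_mul_div, le_div_iff₀ (mul_pos hx hy)]
  nlinarith [mul_nonneg (mul_nonneg ha hb) (sq_nonneg (u * y - v * x))]

section Convex

variable {E : Type*} [AddCommGroup E] [Module ℝ E] {s : Set E}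

theorem ConvexOn.sq_div {f g : E → ℝ} (hf : ConvexOn ℝ s f) (hf₀ : ∀ p ∈ s, 0 ≤ f p)
    (hg : ConcaveOn ℝ s g) (hg₀ : ∀ p ∈ s, 0 < g p) :
    ConvexOn ℝ s fun p => f p ^ 2 / g p := by
  refine ⟨hf.1, fun p hp q hq a b ha hb hab => ?_⟩
  have hmem : a • p + b • q ∈ s := hf.1 hp hq ha hb hab
  have hf_le : f (a • p + b • q) ≤ a * f p + b * f q := hf.2 hp hq ha hb hab
  have hg_le : a * g p + b * g q ≤ g (a • p + b • q) := hg.2 hp hq ha hb hab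
  have hg_comb : 0 < a * g p + b * g q := by
    rcases ha.eq_or_lt with rfl | ha'
    · simpa [show b = 1 by linarith] using hg₀ q hq
    · nlinarith [hg₀ p hp, hg₀ q hq]
  calc f (a • p + b • q) ^ 2 / g (a • p + b • q)
      ≤ (a * f p + b * f q) ^ 2 / g (a • p + b • q) :=
        div_le_div_of_nonneg_right (pow_le_pow_left₀ (hf₀ _ hmem) hf_le 2) (hg₀ _ hmem).le
    _ ≤ (a * f p + b * f q) ^ 2 / (a * g p + b * g q) :=
        div_le_div_of_nonneg_left (sq_nonneg _) hg_comb hg_le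
    _ ≤ a * (f p ^ 2 / g p) + b * (f q ^ 2 / g q) :=
        mul_add_mul_sq_div_le ha hb (hg₀ p hp) (hg₀ q hq)

theorem convexOn_integral {Ω : Type*} [MeasurableSpace Ω] {μ : Measure Ω} {G : E → Ω → ℝ}
    (hs : Convex ℝ s) (hG : ∀ᵐ ω ∂μ, ConvexOn ℝ s fun p => G p ω)
    (hint : ∀ p ∈ s, Integrable (G p) μ) : ConvexOn ℝ s fun p => ∫ ω, G p ω ∂μ := by
  refine ⟨hs, fun p hp q hq a b ha hb hab => ?_⟩
  have hGp : Integrable (fun ω => a • G p ω) μ := (hint p hp).smul a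
  have hGq : Integrable (fun ω => b • G q ω) μ := (hint q hq).smul b
  calc ∫ ω, G (a • p + b • q) ω ∂μ ≤ ∫ ω, a • G p ω + b • G q ω ∂μ :=
        integral_mono_ae (hint _ (hs hp hq ha hb hab)) (hGp.add hGq)
          (hG.mono fun ω hω => hω.2 hp hq ha hb hab)
    _ = a • ∫ ω, G p ω ∂μ + b • ∫ ω, G q ω ∂μ := by
        rw [integral_add hGp hGq, integral_smul, integral_smul]

end Convex

/-- Joint convexity of the lifted objective
`φ(x, y, z) = (c/z)·E[(F(x,·) − y)₊²] + y + (c/4)·z` on `X × ℝ × (0, ∞)`. -/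
theorem stmt_2 {n : ℕ} {Ω : Type*} [MeasurableSpace Ω] (P : Measure Ω) [IsProbabilityMeasure P]
    (X : Set (Fin n → ℝ)) (hX : Convex ℝ X) (c : ℝ) (hc : 0 < c)
    (F : (Fin n → ℝ) → Ω → ℝ)
    (hconv : ∀ᵐ ω ∂P, ConvexOn ℝ X (fun x => F x ω))
    (hL2 : ∀ x ∈ X, MemLp (F x) 2 P) :
    ConvexOn ℝ (X ×ˢ (Set.univ : Set ℝ) ×ˢ Set.Ioi (0 : ℝ))
      (fun p : (Fin n → ℝ) × ℝ × ℝ =>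
        (c / p.2.2) * (∫ ω, (max (F p.1 ω - p.2.1) 0) ^ 2 ∂P) + p.2.1 + (c / 4) * p.2.2) := by
  set s := X ×ˢ (Set.univ : Set ℝ) ×ˢ Set.Ioi (0 : ℝ)
  have hs : Convex ℝ s := hX.prod (convex_univ.prod (convex_Ioi 0))
  let y : (Fin n → ℝ) × ℝ × ℝ →ₗ[ℝ] ℝ := LinearMap.fst ℝ ℝ ℝ ∘ₗ LinearMap.snd ℝ _ _
  let z : (Fin n → ℝ) × ℝ × ℝ →ₗ[ℝ] ℝ := LinearMap.snd ℝ ℝ ℝ ∘ₗ LinearMap.snd ℝ _ _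
  have hsemivar : ConvexOn ℝ s fun p => ∫ ω, max (F p.1 ω - p.2.1) 0 ^ 2 / p.2.2 ∂P := by
    refine convexOn_integral hs (hconv.mono fun ω hω => ?_) fun p hp =>
      (((hL2 _ hp.1).sub (memLp_const _)).pos_part.integrable_sq).div_const _
    have hsub : ConvexOn ℝ s fun p => F p.1 ω - p.2.1 :=
      ((hω.comp_linearMap (LinearMap.fst ℝ _ _)).subset (fun p hp => hp.1) hs).sub
        (y.concaveOn hs)
    exact (hsub.sup (convexOn_const 0 hs)).sq_div (fun _ _ => le_max_right _ _)
      (z.concaveOn hs) fun p hp => hp.2.2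
  refine ((hsemivar.smul hc.le).add ((y + (c / 4) • z).convexOn hs)).congr fun p _ => ?_
  simp only [integral_div, smul_eq_mul, Pi.add_apply, LinearMap.add_apply, LinearMap.coe_comp,
    LinearMap.coe_fst, LinearMap.coe_snd, Function.comp_apply, LinearMap.smul_apply, y, z]
  ring
end

section
/- Define ψ : ℝ → ℝ by ψ(x) := (8 + 2x²) + (1/2)·(16 − (8 + 2x²))² + 1/4. Then ψ(x) = 2x⁴ − 14x² + 161/4 for all x, and ψ is not convex on the interval [−1, 1] (indeed ψ''(x) = 24x² − 28 < 0 for all x ∈ [−1, 1]). -/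
/-!
Expanding the square turns `ψ` into the quartic `2x⁴ − 14x² + 161/4`. It is not convex on
`[−1, 1]` because its value `161/4` at the midpoint `0` exceeds the common value `113/4` at the
endpoints `±1`; its second derivative `24x² − 28` is negative wherever `x² ≤ 1`.
-/

lemma not_convexOn_of_lt_midpoint {E : Type*} [AddCommGroup E] [Module ℝ E] {s : Set E}
    {f : E → ℝ} {a b : E} (ha : a ∈ s) (hb : b ∈ s)
    (h : (f a + f b) / 2 < f (midpoint ℝ a b)) : ¬ ConvexOn ℝ s f := by
  intro hf
  have hmid := hf.2 ha hb (by norm_num : (0 : ℝ) ≤ ⅟2) (by norm_num : (0 : ℝ) ≤ ⅟2)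
    (invOf_two_add_invOf_two)
  rw [midpoint_eq_smul_add, smul_add] at h
  simp only [smul_eq_mul, invOf_eq_inv] at h hmid
  linarith

lemma lifted_objective_eq_quartic :
    (fun x : ℝ => (8 + 2 * x ^ 2) + (1 / 2) * (16 - (8 + 2 * x ^ 2)) ^ 2 + 1 / 4)
      = fun x : ℝ => 2 * x ^ 4 - 14 * x ^ 2 + 161 / 4 := by
  funext x
  ring

lemma hasDerivAt_quartic (x : ℝ) :
    HasDerivAt (fun x : ℝ => 2 * x ^ 4 - 14 * x ^ 2 + 161 / 4) (8 * x ^ 3 - 28 * x) x := by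
  refine (((hasDerivAt_pow 4 x).const_mul 2).sub
    ((hasDerivAt_pow 2 x).const_mul 14)).add_const (161 / 4) |>.congr_deriv ?_
  push_cast
  ring

lemma hasDerivAt_cubic (x : ℝ) :
    HasDerivAt (fun x : ℝ => 8 * x ^ 3 - 28 * x) (24 * x ^ 2 - 28) x := by
  refine ((hasDerivAt_pow 3 x).const_mul 8).sub ((hasDerivAt_id x).const_mul 28)
    |>.congr_deriv ?_
  push_cast
  ring

lemma deriv_deriv_quartic (x : ℝ) :
    deriv (deriv fun x : ℝ => 2 * x ^ 4 - 14 * x ^ 2 + 161 / 4) x = 24 * x ^ 2 - 28 := by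
  rw [funext fun y => (hasDerivAt_quartic y).deriv, (hasDerivAt_cubic x).deriv]

/-- The lifted objective of the counterexample instance:
`ψ(x) = (8 + 2x²) + (1/2)(16 − (8 + 2x²))² + 1/4` equals `2x⁴ − 14x² + 161/4`, is not
convex on `[−1, 1]`, and its second derivative is `24x² − 28 < 0` on `[−1, 1]`. -/
theorem stmt_4 :
    (∀ x : ℝ, (8 + 2 * x ^ 2) + (1 / 2) * (16 - (8 + 2 * x ^ 2)) ^ 2 + 1 / 4
        = 2 * x ^ 4 - 14 * x ^ 2 + 161 / 4) ∧
    ¬ ConvexOn ℝ (Set.Icc (-1 : ℝ) 1)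
        (fun x : ℝ => (8 + 2 * x ^ 2) + (1 / 2) * (16 - (8 + 2 * x ^ 2)) ^ 2 + 1 / 4) ∧
    (∀ x ∈ Set.Icc (-1 : ℝ) 1,
      deriv (deriv (fun x : ℝ =>
          (8 + 2 * x ^ 2) + (1 / 2) * (16 - (8 + 2 * x ^ 2)) ^ 2 + 1 / 4)) x
        = 24 * x ^ 2 - 28 ∧ 24 * x ^ 2 - 28 < 0) := by
  rw [lifted_objective_eq_quartic]
  refine ⟨fun x => congrFun lifted_objective_eq_quartic x, ?_, fun x hx => ?_⟩
  · refine not_convexOn_of_lt_midpoint (a := -1) (b := 1) (by norm_num) (by norm_num) ?_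
    norm_num [midpoint_eq_smul_add]
  · have hx_sq : x ^ 2 ≤ 1 := sq_le_one_iff_abs_le_one x |>.2 (abs_le.2 hx)
    exact ⟨deriv_deriv_quartic x, by linarith⟩
end

section
/- Let (Ω, 𝔉, P) be a probability space, U : Ω → ℝ a square-integrable random variable, and c ∈ (0, 1]. Define φ(y, z) := (c/z)·E[(U − y)₊²] + y + (c/4)·z for y ∈ ℝ, z > 0. Then: (i) for every y ∈ ℝ, inf_{z > 0} φ(y, z) = y + c·(E[(U − y)₊²])^{1/2}, and if E[(U − y)₊²] > 0 this infimum is attained at z = 2·(E[(U − y)₊²])^{1/2}; (ii) inf over {(y, z) : y ≥ E[U], z > 0} of φ(y, z) equals E[U] + c·(E[(U − E[U])₊²])^{1/2}, and the infimum over y is attained at y = E[U]. -/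
/-!
For fixed `y` the objective is `y + c (G / z + z / 4)` with `G = E[(U − y)₊²]`, and AM-GM gives
`G / z + z / 4 ≥ √G`, with equality at `z = 2√G`. Restricting to `y ≥ E U` costs nothing: from
`(U − m)₊ ≤ (U − y)₊ + (y − m)` and the triangle inequality in `L²(P)` we get
`√G(m) ≤ √G(y) + (y − m)` for `m ≤ y`, so `c ≤ 1` makes `y + c √G(y)` nondecreasing.
-/

open MeasureTheory

section AMGM

variable {c G : ℝ}

lemma mul_sqrt_le_div_mul_add_mul (hc : 0 ≤ c) (hG : 0 ≤ G) {z : ℝ} (hz : 0 < z) :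
    c * √G ≤ c / z * G + c / 4 * z := by
  have hAMGM : √G ≤ G / z + z / 4 := by
    rw [div_add_div _ _ hz.ne' (by norm_num), le_div_iff₀ (by positivity)]
    nlinarith [sq_nonneg (√G - z / 2), Real.sq_sqrt hG]
  calc c * √G ≤ c * (G / z + z / 4) := mul_le_mul_of_nonneg_left hAMGM hc
    _ = c / z * G + c / 4 * z := by field_simp

lemma div_mul_add_mul_two_mul_sqrt (hG : 0 < G) :
    c / (2 * √G) * G + c / 4 * (2 * √G) = c * √G := by
  have hs : 0 < √G := Real.sqrt_pos.2 hG
  field_simp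
  linear_combination (-4 * c) * Real.sq_sqrt hG.le

lemma isGLB_div_mul_add_add_mul (hc : 0 < c) (hG : 0 ≤ G) (y : ℝ) :
    IsGLB {v : ℝ | ∃ z > (0 : ℝ), v = c / z * G + y + c / 4 * z} (y + c * √G) := by
  refine ⟨?_, fun b hb => ?_⟩
  · rintro v ⟨z, hz, rfl⟩
    linarith [mul_sqrt_le_div_mul_add_mul hc.le hG hz]
  rcases hG.lt_or_eq with hG | rfl
  · refine hb ⟨2 * √G, by positivity, ?_⟩
    linarith [div_mul_add_mul_two_mul_sqrt (c := c) hG]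
  · -- with `G = 0` the infimum `y` is only approached as `z → 0`
    rw [Real.sqrt_zero, mul_zero, add_zero]
    refine le_of_forall_pos_le_add fun ε hε => hb ⟨4 * ε / c, by positivity, ?_⟩
    field_simp
    ring

end AMGM

section L2

variable {Ω : Type*} [MeasurableSpace Ω] {P : Measure Ω} [IsProbabilityMeasure P]

lemma integral_le_sqrt_integral_sq {f : Ω → ℝ} (hf : MemLp f 2 P) :
    ∫ ω, f ω ∂P ≤ √(∫ ω, f ω ^ 2 ∂P) := by
  have hvar := ProbabilityTheory.variance_nonneg f P
  rw [ProbabilityTheory.variance_eq_sub hf] at hvar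
  simp only [Pi.pow_apply] at hvar
  exact Real.le_sqrt_of_sq_le (by linarith)

lemma integral_add_const_sq_le {f : Ω → ℝ} (hf : MemLp f 2 P) {a : ℝ} (ha : 0 ≤ a) :
    ∫ ω, (f ω + a) ^ 2 ∂P ≤ (√(∫ ω, f ω ^ 2 ∂P) + a) ^ 2 := by
  have hf1 : Integrable f P := hf.integrable one_le_two
  have hexpand : ∫ ω, (f ω + a) ^ 2 ∂P = ∫ ω, f ω ^ 2 ∂P + 2 * a * ∫ ω, f ω ∂P + a ^ 2 := by
    simp_rw [add_sq, mul_assoc, mul_comm _ a, ← mul_assoc]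
    have hsum : Integrable (fun ω => f ω ^ 2 + 2 * a * f ω) P :=
      hf.integrable_sq.add (hf1.const_mul _)
    rw [integral_add hsum (integrable_const _),
      integral_add hf.integrable_sq (hf1.const_mul _), integral_const_mul, integral_const]
    simp
  rw [hexpand, add_sq, Real.sq_sqrt (integral_nonneg fun ω => sq_nonneg (f ω))]
  nlinarith [integral_le_sqrt_integral_sq hf]

lemma sqrt_integral_posPart_sq_le {U : Ω → ℝ} (hU : MemLp U 2 P) {m y : ℝ} (hmy : m ≤ y) :
    √(∫ ω, max (U ω - m) 0 ^ 2 ∂P) ≤ √(∫ ω, max (U ω - y) 0 ^ 2 ∂P) + (y - m) := by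
  have hpos : ∀ t, MemLp (fun ω => max (U ω - t) 0) 2 P := fun t =>
    (hU.sub (memLp_const t)).pos_part
  have hshift : ∀ ω, max (U ω - m) 0 ≤ max (U ω - y) 0 + (y - m) := fun ω =>
    max_le (by linarith [le_max_left (U ω - y) 0]) (by linarith [le_max_right (U ω - y) 0])
  have hint : ∫ ω, max (U ω - m) 0 ^ 2 ∂P ≤ ∫ ω, (max (U ω - y) 0 + (y - m)) ^ 2 ∂P :=
    integral_mono (hpos m).integrable_sq ((hpos y).add (memLp_const _)).integrable_sq
      fun ω => pow_le_pow_left₀ (le_max_right _ _) (hshift ω) 2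
  calc √(∫ ω, max (U ω - m) 0 ^ 2 ∂P)
      ≤ √((√(∫ ω, max (U ω - y) 0 ^ 2 ∂P) + (y - m)) ^ 2) :=
        Real.sqrt_le_sqrt (hint.trans (integral_add_const_sq_le (hpos y) (sub_nonneg.2 hmy)))
    _ = √(∫ ω, max (U ω - y) 0 ^ 2 ∂P) + (y - m) :=
        Real.sqrt_sq (add_nonneg (Real.sqrt_nonneg _) (sub_nonneg.2 hmy))

end L2

/-- Properties of the lifted objective `φ(y, z) = (c/z)·E[(U − y)₊²] + y + (c/4)·z`:
(i) for every `y`, `inf_{z>0} φ(y, z) = y + c·√(E[(U − y)₊²])`, attained at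
`z = 2·√(E[(U − y)₊²])` whenever `E[(U − y)₊²] > 0`;
(ii) the infimum of `φ` over `{(y, z) : y ≥ E[U], z > 0}` equals
`E[U] + c·√(E[(U − E[U])₊²])`, the infimum over `y` being attained at `y = E[U]`. -/
theorem stmt_5 {Ω : Type*} [MeasurableSpace Ω] (P : Measure Ω) [IsProbabilityMeasure P]
    (U : Ω → ℝ) (hU : MemLp U 2 P) (c : ℝ) (hc : c ∈ Set.Ioc (0 : ℝ) 1)
    (g : ℝ → ℝ) (hg : ∀ y, g y = ∫ ω, (max (U ω - y) 0) ^ 2 ∂P)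
    (φ : ℝ → ℝ → ℝ) (hφ : ∀ y z, φ y z = (c / z) * g y + y + (c / 4) * z) :
    (∀ y : ℝ,
      IsGLB {v : ℝ | ∃ z > (0 : ℝ), v = φ y z} (y + c * Real.sqrt (g y)) ∧
      (0 < g y →
        0 < 2 * Real.sqrt (g y) ∧
        φ y (2 * Real.sqrt (g y)) = y + c * Real.sqrt (g y))) ∧
    IsGLB {v : ℝ | ∃ y z : ℝ, (∫ ω, U ω ∂P) ≤ y ∧ 0 < z ∧ v = φ y z}
      ((∫ ω, U ω ∂P) + c * Real.sqrt (g (∫ ω, U ω ∂P))) ∧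
    IsGLB {v : ℝ | ∃ z > (0 : ℝ), v = φ (∫ ω, U ω ∂P) z}
      ((∫ ω, U ω ∂P) + c * Real.sqrt (g (∫ ω, U ω ∂P))) := by
  obtain ⟨hc0, hc1⟩ := hc
  set m := ∫ ω, U ω ∂P
  have hg0 : ∀ y, 0 ≤ g y := fun y => (hg y).symm ▸ integral_nonneg fun ω => sq_nonneg _
  have hglb : ∀ y, IsGLB {v : ℝ | ∃ z > (0 : ℝ), v = φ y z} (y + c * √(g y)) := fun y => by
    simpa only [hφ] using isGLB_div_mul_add_add_mul hc0 (hg0 y) y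
  have hmono : ∀ y, m ≤ y → m + c * √(g m) ≤ y + c * √(g y) := fun y hy => by
    have hlip := sqrt_integral_posPart_sq_le hU hy
    rw [← hg, ← hg] at hlip
    nlinarith [mul_le_mul_of_nonneg_left hlip hc0.le]
  refine ⟨fun y => ⟨hglb y, fun hgy => ⟨by positivity, ?_⟩⟩, ⟨?_, fun b hb => ?_⟩, hglb m⟩
  · rw [hφ]
    linarith [div_mul_add_mul_two_mul_sqrt (c := c) hgy]
  · rintro v ⟨y, z, hy, hz, rfl⟩
    exact (hmono y hy).trans ((hglb y).1 ⟨z, hz, rfl⟩)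
  · exact (hglb m).2 fun v ⟨z, hz, hv⟩ => hb ⟨m, z, le_rfl, hz, hv⟩
end

section
/- Let (Ω, 𝔉, P) be a probability space, V : Ω → ℝ a random variable with mean μ := E[V] and E[(V − μ)₊⁴] ≤ M⁴, and let K > 0, c ∈ (0, 1], z > 0, and y ∈ ℝ with |y − μ| ≤ 2K. Then E[( −(c/z²)·(V − y)₊² + c/4 )²] ≤ (12c²/z⁴)·(M⁴ + 16K⁴) + 3c²/16. -/
/-!
Pointwise, `(−a s + b)² ≤ a² s² + b²` as soon as `a b s ≥ 0`, and shifting the threshold of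
the positive part from `E[V]` to `y` costs at most `|y − E[V]| ≤ 2K`, so that
`(V − y)₊⁴ ≤ 8 (V − E[V])₊⁴ + 8 (2K)⁴`. Integrating this bound against the probability
measure and using the fourth-moment bound gives the claim, with room to spare in the constants.
-/

open MeasureTheory

lemma posPart_sub_le_posPart_sub_add {v y μ r : ℝ} (h : |y - μ| ≤ r) :
    max (v - y) 0 ≤ max (v - μ) 0 + r := by
  have hr : 0 ≤ r := (abs_nonneg _).trans h
  refine max_le ?_ (add_nonneg (le_max_right _ _) hr)
  linarith [le_max_left (v - μ) 0, (abs_le.mp h).1]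

lemma posPart_sub_pow_four_le {v y μ r : ℝ} (h : |y - μ| ≤ r) :
    max (v - y) 0 ^ 4 ≤ 8 * (max (v - μ) 0 ^ 4 + r ^ 4) := by
  have hr : 0 ≤ r := (abs_nonneg _).trans h
  calc max (v - y) 0 ^ 4 ≤ (max (v - μ) 0 + r) ^ 4 :=
        pow_le_pow_left₀ (le_max_right _ _) (posPart_sub_le_posPart_sub_add h) 4
    _ ≤ 2 ^ (4 - 1) * (max (v - μ) 0 ^ 4 + r ^ 4) := add_pow_le (le_max_right _ _) hr 4
    _ = 8 * (max (v - μ) 0 ^ 4 + r ^ 4) := by norm_num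

lemma sq_neg_mul_add_le {a b s : ℝ} (h : 0 ≤ a * b * s) :
    (-a * s + b) ^ 2 ≤ a ^ 2 * s ^ 2 + b ^ 2 := by
  nlinarith

lemma integral_le_mul_integral_add_of_le {Ω : Type*} [MeasurableSpace Ω] {P : Measure Ω}
    [IsProbabilityMeasure P] {f g : Ω → ℝ} {a b : ℝ} (hf : 0 ≤ᵐ[P] f) (hg : Integrable g P)
    (hfg : ∀ᵐ ω ∂P, f ω ≤ a * g ω + b) :
    ∫ ω, f ω ∂P ≤ a * ∫ ω, g ω ∂P + b := by
  have hbound : ∫ ω, f ω ∂P ≤ ∫ ω, (a * g ω + b) ∂P :=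
    integral_mono_of_nonneg hf ((hg.const_mul a).add (integrable_const b)) hfg
  rwa [integral_add (hg.const_mul a) (integrable_const b), integral_const_mul, integral_const,
    probReal_univ, one_smul] at hbound

theorem stmt_10_general {Ω : Type*} [MeasurableSpace Ω] (P : Measure Ω) [IsProbabilityMeasure P]
    (V : Ω → ℝ)
    (M : ℝ) (hM4int : Integrable (fun ω => (max (V ω - ∫ ω', V ω' ∂P) 0) ^ 4) P)
    (hM : (∫ ω, (max (V ω - ∫ ω', V ω' ∂P) 0) ^ 4 ∂P) ≤ M ^ 4)
    (K c z y : ℝ)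
    (hy : |y - ∫ ω, V ω ∂P| ≤ 2 * K) :
    (∫ ω, (-(c / z ^ 2) * (max (V ω - y) 0) ^ 2 + c / 4) ^ 2 ∂P)
      ≤ 12 * c ^ 2 / z ^ 4 * (M ^ 4 + 16 * K ^ 4) + 3 * c ^ 2 / 16 := by
  set μ := ∫ ω, V ω ∂P
  have hcz : 0 ≤ c ^ 2 / z ^ 4 := by positivity
  have hpointwise : ∀ ω, (-(c / z ^ 2) * (max (V ω - y) 0) ^ 2 + c / 4) ^ 2
      ≤ 8 * (c ^ 2 / z ^ 4) * max (V ω - μ) 0 ^ 4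
        + (128 * (c ^ 2 / z ^ 4) * K ^ 4 + c ^ 2 / 16) := fun ω => by
    have hsq := sq_neg_mul_add_le (a := c / z ^ 2) (b := c / 4) (s := max (V ω - y) 0 ^ 2)
      (by rw [show c / z ^ 2 * (c / 4) = c ^ 2 / (4 * z ^ 2) by ring]; positivity)
    calc _ ≤ c ^ 2 / z ^ 4 * max (V ω - y) 0 ^ 4 + c ^ 2 / 16 := by convert hsq using 2 <;> ring
      _ ≤ c ^ 2 / z ^ 4 * (8 * (max (V ω - μ) 0 ^ 4 + (2 * K) ^ 4)) + c ^ 2 / 16 := by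
        gcongr; exact posPart_sub_pow_four_le hy
      _ = _ := by ring
  have hintegral := integral_le_mul_integral_add_of_le (Filter.Eventually.of_forall
    fun ω => sq_nonneg _) hM4int (Filter.Eventually.of_forall hpointwise)
  have hM4 : 0 ≤ M ^ 4 := by positivity
  have hK4 : 0 ≤ K ^ 4 := by positivity
  calc _ ≤ _ := hintegral
    _ ≤ 8 * (c ^ 2 / z ^ 4) * M ^ 4 + (128 * (c ^ 2 / z ^ 4) * K ^ 4 + c ^ 2 / 16) := by gcongr
    _ ≤ _ := by
      rw [mul_div_assoc]
      linarith [mul_nonneg hcz hM4, mul_nonneg hcz hK4, sq_nonneg c]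

/-- Second-moment bound for the stochastic subgradient of the Lagrangian with respect to
`z`: if `E[(V − E[V])₊⁴] ≤ M⁴` and `|y − E[V]| ≤ 2K`, then
`E[(−(c/z²)(V − y)₊² + c/4)²] ≤ (12c²/z⁴)(M⁴ + 16K⁴) + 3c²/16`. -/
theorem stmt_10 {Ω : Type*} [MeasurableSpace Ω] (P : Measure Ω) [IsProbabilityMeasure P]
    (V : Ω → ℝ) (hV : Integrable V P)
    (M : ℝ) (hM4int : Integrable (fun ω => (max (V ω - ∫ ω', V ω' ∂P) 0) ^ 4) P)
    (hM : (∫ ω, (max (V ω - ∫ ω', V ω' ∂P) 0) ^ 4 ∂P) ≤ M ^ 4)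
    (K c z y : ℝ) (hK : 0 < K) (hc : c ∈ Set.Ioc (0 : ℝ) 1) (hz : 0 < z)
    (hy : |y - ∫ ω, V ω ∂P| ≤ 2 * K) :
    (∫ ω, (-(c / z ^ 2) * (max (V ω - y) 0) ^ 2 + c / 4) ^ 2 ∂P)
      ≤ 12 * c ^ 2 / z ^ 4 * (M ^ 4 + 16 * K ^ 4) + 3 * c ^ 2 / 16 :=
  stmt_10_general P V M hM4int hM K c z y hy
end

section
/- Let (Ω, 𝔉, P) be a probability space, V : Ω → ℝ a random variable with mean μ := E[V] and E[(V − μ)²] ≤ β², and W : Ω → ℝⁿ a random vector with mean w := E[W] such that ‖w‖₂ ≤ L_f and E[‖W − w‖₂²] ≤ σ_f². Assume E[‖2(V − μ)₊·(W − w)‖₂²] ≤ L_G². Let K > 0, c ∈ (0, 1], z > 0, λ ∈ [0, 1], and y ∈ ℝ with |y − μ| ≤ 2K. Then E[‖(2c/z)·(V − y)₊·W + λ·W‖₂²] ≤ (3c²/z²)·[L_G² + 4L_f²β² + 64(L_f² + σ_f²)K²] + 12(L_f² + σ_f²). -/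
/-!
Write `m := (V - μ)₊`, `r := c / z` and `d := (V - y)₊ - m`, so that `|d| ≤ |y - μ| ≤ 2K`. The
stochastic subgradient splits as
`(2r(V - y)₊ + λ) W = r · 2m (W - w) + 2rm · w + (2rd + λ) W`.
The first term is the semivariance gradient, the second is controlled by `‖w‖ ≤ L_f` and
`m² ≤ (V - μ)²`, and the scalar of the third satisfies `(2rd + λ)² ≤ 32r²K² + 2`, while
`‖W‖² ≤ 2‖W - w‖² + 2‖w‖²`. Squaring with `‖a + b + c‖² ≤ 3(‖a‖² + ‖b‖² + ‖c‖²)` and taking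
expectations gives the bound.
-/

open MeasureTheory

section

variable {E : Type*} [SeminormedAddCommGroup E]

lemma norm_add_sq_le_two_mul (a b : E) : ‖a + b‖ ^ 2 ≤ 2 * (‖a‖ ^ 2 + ‖b‖ ^ 2) :=
  (pow_le_pow_left₀ (norm_nonneg _) (norm_add_le a b) 2).trans add_sq_le

lemma norm_add₃_sq_le (a b c : E) : ‖a + b + c‖ ^ 2 ≤ 3 * (‖a‖ ^ 2 + ‖b‖ ^ 2 + ‖c‖ ^ 2) := by
  have h := pow_le_pow_left₀ (norm_nonneg _) (norm_add₃_le (a := a) (b := b) (c := c)) 2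
  nlinarith [sq_nonneg (‖a‖ - ‖b‖), sq_nonneg (‖a‖ - ‖c‖), sq_nonneg (‖b‖ - ‖c‖)]

variable [NormedSpace ℝ E]

lemma norm_smul_sq (t : ℝ) (x : E) : ‖t • x‖ ^ 2 = t ^ 2 * ‖x‖ ^ 2 := by
  rw [norm_smul, mul_pow, Real.norm_eq_abs, sq_abs]

lemma norm_sq_posPart_smul_add_smul_le {r v μ y K lam : ℝ} (hy : |y - μ| ≤ 2 * K)
    (hlam : |lam| ≤ 1) (W w : E) :
    ‖(2 * r * max (v - y) 0) • W + lam • W‖ ^ 2 ≤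
      3 * r ^ 2 * ‖(2 * max (v - μ) 0) • (W - w)‖ ^ 2 + 12 * r ^ 2 * ‖w‖ ^ 2 * (v - μ) ^ 2
        + (192 * r ^ 2 * K ^ 2 + 12) * (‖W - w‖ ^ 2 + ‖w‖ ^ 2) := by
  set m := max (v - μ) 0
  set d := max (v - y) 0 - m
  have hsplit : (2 * r * max (v - y) 0) • W + lam • W
      = (r * (2 * m)) • (W - w) + (2 * r * m) • w + (2 * r * d + lam) • W := by
    simp only [d]; module
  have hm : m ^ 2 ≤ (v - μ) ^ 2 := by
    rw [← sq_abs (v - μ)]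
    exact pow_le_pow_left₀ (le_max_right _ _) (max_le (le_abs_self _) (abs_nonneg _)) 2
  have hd : |d| ≤ 2 * K := by
    refine (abs_max_sub_max_le_abs _ _ _).trans ?_
    rwa [sub_sub_sub_cancel_left, abs_sub_comm]
  have hs : (2 * r * d + lam) ^ 2 ≤ 32 * r ^ 2 * K ^ 2 + 2 := by
    have hd2 : d ^ 2 ≤ (2 * K) ^ 2 := sq_le_sq.mpr (hd.trans (le_abs_self _))
    have hlam2 : lam ^ 2 ≤ 1 := (sq_le_one_iff_abs_le_one lam).mpr hlam
    nlinarith [add_sq_le (a := 2 * r * d) (b := lam), sq_nonneg r]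
  have hW : ‖W‖ ^ 2 ≤ 2 * (‖W - w‖ ^ 2 + ‖w‖ ^ 2) := by
    simpa only [sub_add_cancel] using norm_add_sq_le_two_mul (W - w) w
  rw [hsplit]
  calc _ ≤ 3 * (‖(r * (2 * m)) • (W - w)‖ ^ 2 + ‖(2 * r * m) • w‖ ^ 2
          + ‖(2 * r * d + lam) • W‖ ^ 2) := norm_add₃_sq_le _ _ _
    _ = 3 * (r ^ 2 * ‖(2 * m) • (W - w)‖ ^ 2 + 4 * r ^ 2 * ‖w‖ ^ 2 * m ^ 2
          + (2 * r * d + lam) ^ 2 * ‖W‖ ^ 2) := by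
      rw [mul_smul, norm_smul_sq r, norm_smul_sq (2 * r * m), norm_smul_sq (2 * r * d + lam)]
      ring
    _ ≤ 3 * (r ^ 2 * ‖(2 * m) • (W - w)‖ ^ 2 + 4 * r ^ 2 * ‖w‖ ^ 2 * (v - μ) ^ 2
          + (32 * r ^ 2 * K ^ 2 + 2) * (2 * (‖W - w‖ ^ 2 + ‖w‖ ^ 2))) := by gcongr
    _ = _ := by ring

end

section

variable {Ω E : Type*} [MeasurableSpace Ω] {P : Measure Ω} [IsProbabilityMeasure P]
  [SeminormedAddCommGroup E] [NormedSpace ℝ E] {V : Ω → ℝ} {W : Ω → E} {w : E}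
  {μ β Lf σf LG r K lam y : ℝ}

theorem integral_norm_sq_posPart_smul_add_smul_le
    (hV2 : Integrable (fun ω => (V ω - μ) ^ 2) P) (hβ : ∫ ω, (V ω - μ) ^ 2 ∂P ≤ β ^ 2)
    (hw : ‖w‖ ≤ Lf)
    (hW2 : Integrable (fun ω => ‖W ω - w‖ ^ 2) P) (hσ : ∫ ω, ‖W ω - w‖ ^ 2 ∂P ≤ σf ^ 2)
    (hG2 : Integrable (fun ω => ‖(2 * max (V ω - μ) 0) • (W ω - w)‖ ^ 2) P)
    (hLG : ∫ ω, ‖(2 * max (V ω - μ) 0) • (W ω - w)‖ ^ 2 ∂P ≤ LG ^ 2)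
    (hy : |y - μ| ≤ 2 * K) (hlam : |lam| ≤ 1) :
    ∫ ω, ‖(2 * r * max (V ω - y) 0) • W ω + lam • W ω‖ ^ 2 ∂P
      ≤ 3 * r ^ 2 * LG ^ 2 + 12 * r ^ 2 * Lf ^ 2 * β ^ 2
        + (192 * r ^ 2 * K ^ 2 + 12) * (σf ^ 2 + Lf ^ 2) := by
  set G := fun ω => ‖(2 * max (V ω - μ) 0) • (W ω - w)‖ ^ 2
  set C := 192 * r ^ 2 * K ^ 2 + 12
  have hw2 : ‖w‖ ^ 2 ≤ Lf ^ 2 := pow_le_pow_left₀ (norm_nonneg _) hw 2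
  calc ∫ ω, ‖(2 * r * max (V ω - y) 0) • W ω + lam • W ω‖ ^ 2 ∂P
      ≤ ∫ ω, (3 * r ^ 2 * G ω + 12 * r ^ 2 * ‖w‖ ^ 2 * (V ω - μ) ^ 2
          + C * (‖W ω - w‖ ^ 2 + ‖w‖ ^ 2)) ∂P :=
        integral_mono_of_nonneg (ae_of_all _ fun _ => by positivity)
          (((hG2.const_mul _).add (hV2.const_mul _)).add
            ((hW2.add (integrable_const _)).const_mul _))
          (ae_of_all _ fun ω => norm_sq_posPart_smul_add_smul_le hy hlam (W ω) w)
    _ = 3 * r ^ 2 * (∫ ω, G ω ∂P) + 12 * r ^ 2 * ‖w‖ ^ 2 * (∫ ω, (V ω - μ) ^ 2 ∂P)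
          + C * ((∫ ω, ‖W ω - w‖ ^ 2 ∂P) + ‖w‖ ^ 2) := by
      rw [integral_add, integral_add, integral_const_mul, integral_const_mul, integral_const_mul,
        integral_add hW2 (integrable_const _)]
      · simp
      · exact hG2.const_mul _
      · exact hV2.const_mul _
      · exact (hG2.const_mul _).add (hV2.const_mul _)
      · exact (hW2.add (integrable_const _)).const_mul _
    _ ≤ 3 * r ^ 2 * LG ^ 2 + 12 * r ^ 2 * Lf ^ 2 * β ^ 2 + C * (σf ^ 2 + Lf ^ 2) := by
      gcongr
    _ = _ := by ring

end

theorem stmt_11_general {n : ℕ} {Ω : Type*} [MeasurableSpace Ω] (P : Measure Ω)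
    [IsProbabilityMeasure P]
    (V : Ω → ℝ)
    (β : ℝ) (hV2 : Integrable (fun ω => (V ω - ∫ ω', V ω' ∂P) ^ 2) P)
    (hβ : (∫ ω, (V ω - ∫ ω', V ω' ∂P) ^ 2 ∂P) ≤ β ^ 2)
    (W : Ω → EuclideanSpace ℝ (Fin n))
    (Lf σf LG : ℝ)
    (hw : ‖∫ ω, W ω ∂P‖ ≤ Lf)
    (hW2 : Integrable (fun ω => ‖W ω - ∫ ω', W ω' ∂P‖ ^ 2) P)
    (hσ : (∫ ω, ‖W ω - ∫ ω', W ω' ∂P‖ ^ 2 ∂P) ≤ σf ^ 2)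
    (hG2 : Integrable
      (fun ω => ‖(2 * max (V ω - ∫ ω', V ω' ∂P) 0) • (W ω - ∫ ω', W ω' ∂P)‖ ^ 2) P)
    (hLG : (∫ ω, ‖(2 * max (V ω - ∫ ω', V ω' ∂P) 0) • (W ω - ∫ ω', W ω' ∂P)‖ ^ 2 ∂P)
      ≤ LG ^ 2)
    (K c z lam y : ℝ)
    (hlam : lam ∈ Set.Icc (0 : ℝ) 1) (hy : |y - ∫ ω, V ω ∂P| ≤ 2 * K) :
    (∫ ω, ‖((2 * c / z) * max (V ω - y) 0) • W ω + lam • W ω‖ ^ 2 ∂P)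
      ≤ (3 * c ^ 2 / z ^ 2) * (LG ^ 2 + 4 * Lf ^ 2 * β ^ 2 + 64 * (Lf ^ 2 + σf ^ 2) * K ^ 2)
        + 12 * (Lf ^ 2 + σf ^ 2) := by
  have hlam' : |lam| ≤ 1 := abs_le.mpr ⟨by linarith [hlam.1], hlam.2⟩
  calc _ = ∫ ω, ‖(2 * (c / z) * max (V ω - y) 0) • W ω + lam • W ω‖ ^ 2 ∂P := by
        simp_rw [mul_div_assoc]
    _ ≤ _ := integral_norm_sq_posPart_smul_add_smul_le hV2 hβ hw hW2 hσ hG2 hLG hy hlam'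
    _ = _ := by ring

/-- Second-moment bound for the stochastic subgradient of the Lagrangian with respect to
`x`: under the stated moment bounds on `V` (playing the role of `F(x,ξ)`) and on the
random vector `W` (playing the role of `F'(x,ξ)`),
`E[‖(2c/z)(V − y)₊·W + λ·W‖²] ≤ (3c²/z²)[L_G² + 4L_f²β² + 64(L_f² + σ_f²)K²]
  + 12(L_f² + σ_f²)`. -/
theorem stmt_11 {n : ℕ} {Ω : Type*} [MeasurableSpace Ω] (P : Measure Ω)
    [IsProbabilityMeasure P]
    (V : Ω → ℝ) (hV : Integrable V P)
    (β : ℝ) (hV2 : Integrable (fun ω => (V ω - ∫ ω', V ω' ∂P) ^ 2) P)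
    (hβ : (∫ ω, (V ω - ∫ ω', V ω' ∂P) ^ 2 ∂P) ≤ β ^ 2)
    (W : Ω → EuclideanSpace ℝ (Fin n)) (hW : Integrable W P)
    (Lf σf LG : ℝ)
    (hw : ‖∫ ω, W ω ∂P‖ ≤ Lf)
    (hW2 : Integrable (fun ω => ‖W ω - ∫ ω', W ω' ∂P‖ ^ 2) P)
    (hσ : (∫ ω, ‖W ω - ∫ ω', W ω' ∂P‖ ^ 2 ∂P) ≤ σf ^ 2)
    (hG2 : Integrable
      (fun ω => ‖(2 * max (V ω - ∫ ω', V ω' ∂P) 0) • (W ω - ∫ ω', W ω' ∂P)‖ ^ 2) P)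
    (hLG : (∫ ω, ‖(2 * max (V ω - ∫ ω', V ω' ∂P) 0) • (W ω - ∫ ω', W ω' ∂P)‖ ^ 2 ∂P)
      ≤ LG ^ 2)
    (K c z lam y : ℝ) (hK : 0 < K) (hc : c ∈ Set.Ioc (0 : ℝ) 1) (hz : 0 < z)
    (hlam : lam ∈ Set.Icc (0 : ℝ) 1) (hy : |y - ∫ ω, V ω ∂P| ≤ 2 * K) :
    (∫ ω, ‖((2 * c / z) * max (V ω - y) 0) • W ω + lam • W ω‖ ^ 2 ∂P)
      ≤ (3 * c ^ 2 / z ^ 2) * (LG ^ 2 + 4 * Lf ^ 2 * β ^ 2 + 64 * (Lf ^ 2 + σf ^ 2) * K ^ 2)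
        + 12 * (Lf ^ 2 + σf ^ 2) :=
  stmt_11_general P V β hV2 hβ W Lf σf LG hw hW2 hσ hG2 hLG K c z lam y hlam hy
end

section
/- Let X be a nonempty set, g : X → [0, ∞) and f : X → ℝ functions, and x* ∈ X a point with f(x*) ≤ f(x) and g(x*) ≤ g(x) for all x ∈ X. Define h(x) := (g(x))^{1/2} + f(x). Then for every ε > 0 and every x ∈ X with h(x) − h(x*) ≤ ε, one has g(x) − g(x*) ≤ max{ 2·(2·g(x*))^{1/2}·ε, 8ε² }. -/
/-! Since `f` is minimized at `x*`, an `ε`-optimal point of `h = √g + f` has `√(g x) - √(g x*) ≤ ε`.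
Writing `a = √(g x*)`, this gives `g x - g x* ≤ 2aε + ε²`; when `2ε ≤ a` the right side is at most
`(5/2)aε ≤ 2√2·aε = 2√(2g(x*))·ε`, and otherwise it is below `5ε² ≤ 8ε²`. -/

open Real

lemma two_mul_mul_add_sq_le_max {a ε : ℝ} (ha : 0 ≤ a) (hε : 0 ≤ ε) :
    2 * a * ε + ε ^ 2 ≤ max (2 * √2 * a * ε) (8 * ε ^ 2) := by
  rcases le_or_gt (2 * ε) a with hsmall | hlarge
  · have hsqrt2 : 5 / 4 ≤ √2 := Real.le_sqrt_of_sq_le (by norm_num)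
    refine le_max_of_le_left ?_
    nlinarith [mul_nonneg ha hε]
  · exact le_max_of_le_right (by nlinarith)

lemma sub_le_max_of_sqrt_sub_sqrt_le {u v ε : ℝ} (hu : 0 ≤ u) (hv : 0 ≤ v)
    (h : √v - √u ≤ ε) : v - u ≤ max (2 * √(2 * u) * ε) (8 * ε ^ 2) := by
  rw [Real.sqrt_mul zero_le_two, ← mul_assoc]
  rcases le_or_gt (√v) (√u) with hle | hlt
  · have : v ≤ u := (Real.sqrt_le_sqrt_iff hu).mp hle
    exact le_max_of_le_right (by nlinarith [sq_nonneg ε])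
  · have hε : 0 ≤ ε := by linarith
    calc v - u = (√v - √u) * (√v + √u) := by
          linear_combination Real.sq_sqrt hu - Real.sq_sqrt hv
      _ ≤ ε * (ε + 2 * √u) :=
          mul_le_mul h (by linarith) (by positivity) hε
      _ = 2 * √u * ε + ε ^ 2 := by ring
      _ ≤ _ := two_mul_mul_add_sq_le_max (Real.sqrt_nonneg u) hε

theorem stmt_14_general {X : Type*} (g : X → ℝ) (hg : ∀ x, 0 ≤ g x) (f : X → ℝ)
    (xs : X) (hfmin : ∀ x, f xs ≤ f x)
    (h : X → ℝ) (hh : ∀ x, h x = Real.sqrt (g x) + f x)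
    (ε : ℝ) (x : X) (hx : h x - h xs ≤ ε) :
    g x - g xs ≤ max (2 * Real.sqrt (2 * g xs) * ε) (8 * ε ^ 2) := by
  have hsqrt : √(g x) - √(g xs) ≤ ε := by
    rw [hh, hh] at hx
    linarith [hfmin x]
  exact sub_le_max_of_sqrt_sub_sqrt_le (hg xs) (hg x) hsqrt

/-- Optimality-gap transfer: if `x*` simultaneously minimizes `f` and the nonnegative
function `g` over `X` and `h = √g + f`, then any `ε`-optimal point `x` of `h` satisfies
`g(x) − g(x*) ≤ max{2·√(2·g(x*))·ε, 8ε²}`. -/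
theorem stmt_14 {X : Type*} (g : X → ℝ) (hg : ∀ x, 0 ≤ g x) (f : X → ℝ)
    (xs : X) (hfmin : ∀ x, f xs ≤ f x) (hgmin : ∀ x, g xs ≤ g x)
    (h : X → ℝ) (hh : ∀ x, h x = Real.sqrt (g x) + f x)
    (ε : ℝ) (hε : 0 < ε) (x : X) (hx : h x - h xs ≤ ε) :
    g x - g xs ≤ max (2 * Real.sqrt (2 * g xs) * ε) (8 * ε ^ 2) :=
  stmt_14_general g hg f xs hfmin h hh ε x hx
end

section
/- Let (Ω, 𝔉, P) be a probability space, p > 1 a real number, c ∈ (0, 1], and U : Ω → ℝ a random variable with E[|U|^p] < ∞. Then the function Φ(y) := y + c·(E[(U − y)₊^p])^{1/p} is nondecreasing on ℝ: for all y₁ ≤ y₂ one has Φ(y₁) ≤ Φ(y₂). -/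
/-!
Pointwise `(U - y₁)₊ ≤ (U - y₂)₊ + (y₂ - y₁)` for `y₁ ≤ y₂`, so Minkowski's inequality in `Lᵖ` of a
probability space shows that `y ↦ ‖(U - y)₊‖ₚ` decreases by at most the increase of `y`.
Since `c ≤ 1`, the term `y` dominates in `Φ`.
-/

open MeasureTheory

namespace MeasureTheory

variable {Ω : Type*} [MeasurableSpace Ω] {P : Measure Ω}

lemma memLp_ofReal_of_integrable_abs_rpow {U : Ω → ℝ} {p : ℝ} (hp : 0 < p)
    (hUm : AEStronglyMeasurable U P) (hUp : Integrable (fun ω => |U ω| ^ p) P) :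
    MemLp U (ENNReal.ofReal p) P := by
  rw [← integrable_norm_rpow_iff hUm (by simpa using hp) ENNReal.ofReal_ne_top,
    ENNReal.toReal_ofReal hp.le]
  exact hUp

lemma integral_rpow_rpow_one_div_eq_toReal_eLpNorm {f : Ω → ℝ} {p : ℝ} (hp : 0 < p)
    (hf0 : ∀ ω, 0 ≤ f ω) (hf : MemLp f (ENNReal.ofReal p) P) :
    (∫ ω, f ω ^ p ∂P) ^ (1 / p) = (eLpNorm f (ENNReal.ofReal p) P).toReal := by
  rw [hf.eLpNorm_eq_integral_rpow_norm (by simpa using hp) ENNReal.ofReal_ne_top,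
    ENNReal.toReal_ofReal hp.le, ENNReal.toReal_ofReal (by positivity), one_div]
  simp only [Real.norm_eq_abs, abs_of_nonneg (hf0 _)]

lemma eLpNorm_le_eLpNorm_add_const [IsProbabilityMeasure P] {f g : Ω → ℝ} {a : ℝ}
    {p : ENNReal} (hp : 1 ≤ p) (hg : AEStronglyMeasurable g P) (ha : 0 ≤ a)
    (hfg : ∀ ω, ‖f ω‖ ≤ g ω + a) :
    eLpNorm f p P ≤ eLpNorm g p P + ENNReal.ofReal a := calc
  eLpNorm f p P ≤ eLpNorm (g + fun _ => a) p P := eLpNorm_mono_real hfg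
  _ ≤ eLpNorm g p P + eLpNorm (fun _ => a) p P :=
    eLpNorm_add_le hg aestronglyMeasurable_const hp
  _ = eLpNorm g p P + ENNReal.ofReal a := by
    rw [eLpNorm_const _ (by positivity) (NeZero.ne P), measure_univ, ENNReal.one_rpow, mul_one,
      Real.enorm_of_nonneg ha]

lemma integral_max_sub_rpow_rpow_le_add [IsProbabilityMeasure P] {U : Ω → ℝ} {p : ℝ}
    (hp : 1 ≤ p) (hU : MemLp U (ENNReal.ofReal p) P) {y₁ y₂ : ℝ} (hy : y₁ ≤ y₂) :
    (∫ ω, max (U ω - y₁) 0 ^ p ∂P) ^ (1 / p) ≤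
      (∫ ω, max (U ω - y₂) 0 ^ p ∂P) ^ (1 / p) + (y₂ - y₁) := by
  have hp0 : 0 < p := zero_lt_one.trans_le hp
  have hmem (y : ℝ) : MemLp (fun ω => max (U ω - y) 0) (ENNReal.ofReal p) P :=
    (hU.sub (memLp_const y)).pos_part
  have hshift : eLpNorm (fun ω => max (U ω - y₁) 0) (ENNReal.ofReal p) P ≤
      eLpNorm (fun ω => max (U ω - y₂) 0) (ENNReal.ofReal p) P + ENNReal.ofReal (y₂ - y₁) :=
    eLpNorm_le_eLpNorm_add_const (by simpa using hp) (hmem y₂).aestronglyMeasurable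
      (sub_nonneg.2 hy) fun ω => by
        rw [Real.norm_of_nonneg (le_max_right _ _)]
        have := le_max_left (U ω - y₂) 0
        have := le_max_right (U ω - y₂) 0
        exact max_le (by linarith) (by linarith)
  have hfin := (hmem y₂).eLpNorm_ne_top
  rw [integral_rpow_rpow_one_div_eq_toReal_eLpNorm hp0 (fun _ => le_max_right _ _) (hmem y₁),
    integral_rpow_rpow_one_div_eq_toReal_eLpNorm hp0 (fun _ => le_max_right _ _) (hmem y₂),
    ← ENNReal.toReal_ofReal (sub_nonneg.2 hy), ← ENNReal.toReal_add hfin ENNReal.ofReal_ne_top]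
  exact ENNReal.toReal_mono (ENNReal.add_ne_top.2 ⟨hfin, ENNReal.ofReal_ne_top⟩) hshift

end MeasureTheory

/-- Monotonicity of the order-`p` mean-upper-semideviation from the target `y`:
`Φ(y) = y + c·(E[(U − y)₊^p])^{1/p}` is nondecreasing when `p > 1` and `c ∈ (0, 1]`. -/
theorem stmt_17 {Ω : Type*} [MeasurableSpace Ω] (P : Measure Ω) [IsProbabilityMeasure P]
    (p : ℝ) (hp : 1 < p) (c : ℝ) (hc : c ∈ Set.Ioc (0 : ℝ) 1)
    (U : Ω → ℝ) (hUm : AEStronglyMeasurable U P)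
    (hUp : Integrable (fun ω => |U ω| ^ p) P) :
    Monotone (fun y : ℝ => y + c * (∫ ω, (max (U ω - y) 0) ^ p ∂P) ^ (1 / p)) := by
  have hU : MemLp U (ENNReal.ofReal p) P :=
    memLp_ofReal_of_integrable_abs_rpow (zero_lt_one.trans hp) hUm hUp
  intro y₁ y₂ hy
  have hshift := integral_max_sub_rpow_rpow_le_add hp.le hU hy
  obtain ⟨hc0, hc1⟩ := hc
  dsimp only
  nlinarith [mul_le_mul_of_nonneg_left hshift hc0.le]
end

section
/- Let (Ω, 𝔉, P) be a probability space, p > 1 a real number, X ⊆ ℝⁿ a convex set, c > 0, and F : X × Ω → ℝ such that for P-almost every ω the map x ↦ F(x, ω) is convex on X, and E[|F(x, ·)|^p] < ∞ for every x ∈ X. Then the function φ(x, y, z) := (c/z^{p−1})·E[(F(x, ·) − y)₊^p] + y + c·(p − 1)·p^{−p/(p−1)}·z is jointly convex on X × ℝ × (0, ∞). -/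
/-!
The map `(t, z) ↦ t ^ p / z ^ (p - 1)` is the perspective `z · f (t / z)` of the convex function
`f t = t ^ p`, hence jointly convex on `[0, ∞) × (0, ∞)`; it is nondecreasing in `t` and
nonincreasing in `z`. Composing it with the convex nonnegative map `(x, y) ↦ (F(x, ω) - y)₊`
and the linear map `z` gives, for almost every `ω`, a jointly convex integrand, and integrating
preserves convexity. The remaining terms of `φ` are linear.
-/

open MeasureTheory Set

theorem ConvexOn.perspective {E : Type*} [AddCommGroup E] [Module ℝ E] {C : Set E} {f : E → ℝ}
    (hf : ConvexOn ℝ C f) :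
    ConvexOn ℝ {q : E × ℝ | 0 < q.2 ∧ q.2⁻¹ • q.1 ∈ C} (fun q => q.2 * f (q.2⁻¹ • q.1)) := by
  set D := {q : E × ℝ | 0 < q.2 ∧ q.2⁻¹ • q.1 ∈ C}
  have key : ∀ ⦃q₁⦄, q₁ ∈ D → ∀ ⦃q₂⦄, q₂ ∈ D →
      ∀ ⦃a b : ℝ⦄, 0 ≤ a → 0 ≤ b → a + b = 1 →
      0 < (a • q₁ + b • q₂).2 ∧ (a • q₁ + b • q₂).2⁻¹ • (a • q₁ + b • q₂).1 ∈ C ∧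
      (a • q₁ + b • q₂).2 * f ((a • q₁ + b • q₂).2⁻¹ • (a • q₁ + b • q₂).1) ≤
        a * (q₁.2 * f (q₁.2⁻¹ • q₁.1)) + b * (q₂.2 * f (q₂.2⁻¹ • q₂.1)) := by
    rintro ⟨t₁, z₁⟩ ⟨hz₁, ht₁⟩ ⟨t₂, z₂⟩ ⟨hz₂, ht₂⟩ a b ha hb hab
    simp only [Prod.smul_mk, Prod.mk_add_mk, smul_eq_mul] at *
    set Z := a * z₁ + b * z₂
    have hZ : 0 < Z := by nlinarith [min_le_left z₁ z₂, min_le_right z₁ z₂, lt_min hz₁ hz₂]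
    have hsum : a * z₁ / Z + b * z₂ / Z = 1 := by rw [← add_div, div_self hZ.ne']
    have hcomb : Z⁻¹ • (a • t₁ + b • t₂) =
        (a * z₁ / Z) • (z₁⁻¹ • t₁) + (b * z₂ / Z) • (z₂⁻¹ • t₂) := by
      simp only [smul_add, smul_smul]
      congr 2 <;> field_simp
    have hw₁ : 0 ≤ a * z₁ / Z := by positivity
    have hw₂ : 0 ≤ b * z₂ / Z := by positivity
    refine ⟨hZ, hcomb ▸ hf.1 ht₁ ht₂ hw₁ hw₂ hsum, ?_⟩
    calc Z * f (Z⁻¹ • (a • t₁ + b • t₂))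
        ≤ Z * ((a * z₁ / Z) • f (z₁⁻¹ • t₁) + (b * z₂ / Z) • f (z₂⁻¹ • t₂)) := by
          rw [hcomb]; exact mul_le_mul_of_nonneg_left (hf.2 ht₁ ht₂ hw₁ hw₂ hsum) hZ.le
      _ = a * (z₁ * f (z₁⁻¹ • t₁)) + b * (z₂ * f (z₂⁻¹ • t₂)) := by
          simp only [smul_eq_mul]; field_simp
  refine ⟨fun q₁ h₁ q₂ h₂ a b ha hb hab => ?_, fun q₁ h₁ q₂ h₂ a b ha hb hab => ?_⟩
  · exact ⟨(key h₁ h₂ ha hb hab).1, (key h₁ h₂ ha hb hab).2.1⟩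
  · simpa only [smul_eq_mul] using (key h₁ h₂ ha hb hab).2.2

theorem convexOn_rpow_div_rpow_sub_one {p : ℝ} (hp : 1 ≤ p) :
    ConvexOn ℝ (Ici 0 ×ˢ Ioi 0) (fun q : ℝ × ℝ => q.1 ^ p / q.2 ^ (p - 1)) := by
  have hdom : {q : ℝ × ℝ | 0 < q.2 ∧ q.2⁻¹ • q.1 ∈ Ici 0} = Ici 0 ×ˢ Ioi 0 := by
    ext ⟨t, z⟩
    simp only [mem_ofPred_eq, smul_eq_mul, mem_Ici, mem_prod, mem_Ioi]
    constructor
    · rintro ⟨hz, ht⟩; exact ⟨nonneg_of_mul_nonneg_right (by linarith) (inv_pos.2 hz), hz⟩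
    · rintro ⟨ht, hz⟩; exact ⟨hz, by positivity⟩
  refine (hdom ▸ (convexOn_rpow hp).perspective).congr fun ⟨t, z⟩ ⟨ht, hz⟩ => ?_
  simp only [mem_Ici, mem_Ioi] at ht hz
  simp only [smul_eq_mul]
  rw [Real.mul_rpow (inv_nonneg.2 hz.le) ht, Real.inv_rpow hz.le, Real.rpow_sub_one hz.ne']
  field_simp

theorem ConvexOn.rpow_div_rpow_sub_one {E : Type*} [AddCommGroup E] [Module ℝ E] {s : Set E}
    {g w : E → ℝ} {p : ℝ} (hp : 1 ≤ p) (hg : ConvexOn ℝ s g) (hw : ConcaveOn ℝ s w)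
    (hg₀ : ∀ x ∈ s, 0 ≤ g x) (hw₀ : ∀ x ∈ s, 0 < w x) :
    ConvexOn ℝ s (fun x => g x ^ p / w x ^ (p - 1)) := by
  refine ⟨hg.1, fun x hx y hy a b ha hb hab => ?_⟩
  have hxy := hg.1 hx hy ha hb hab
  have hW : 0 < a * w x + b * w y := by
    nlinarith [min_le_left (w x) (w y), min_le_right (w x) (w y), lt_min (hw₀ x hx) (hw₀ y hy)]
  have hgxy : g (a • x + b • y) ≤ a * g x + b * g y := hg.2 hx hy ha hb hab
  have hwxy : a * w x + b * w y ≤ w (a • x + b • y) := hw.2 hx hy ha hb hab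
  have hg₀xy := hg₀ _ hxy
  calc g (a • x + b • y) ^ p / w (a • x + b • y) ^ (p - 1)
      ≤ (a * g x + b * g y) ^ p / (a * w x + b * w y) ^ (p - 1) := by
        gcongr
        exact Real.rpow_nonneg (hg₀xy.trans hgxy) p
    _ ≤ a * (g x ^ p / w x ^ (p - 1)) + b * (g y ^ p / w y ^ (p - 1)) := by
        simpa using (convexOn_rpow_div_rpow_sub_one hp).2 (x := (g x, w x)) (y := (g y, w y))
          ⟨hg₀ x hx, hw₀ x hx⟩ ⟨hg₀ y hy, hw₀ y hy⟩ ha hb hab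

theorem ConvexOn.integral {E Ω : Type*} [AddCommGroup E] [Module ℝ E] [MeasurableSpace Ω]
    {μ : Measure Ω} {s : Set E} {f : E → Ω → ℝ} (hs : Convex ℝ s)
    (hf : ∀ᵐ ω ∂μ, ConvexOn ℝ s (f · ω)) (hint : ∀ x ∈ s, Integrable (f x) μ) :
    ConvexOn ℝ s (fun x => ∫ ω, f x ω ∂μ) := by
  refine ⟨hs, fun x hx y hy a b ha hb hab => ?_⟩
  have hle : ∀ᵐ ω ∂μ, f (a • x + b • y) ω ≤ a * f x ω + b * f y ω :=
    hf.mono fun ω hω => hω.2 hx hy ha hb hab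
  have hcomb := ((hint x hx).const_mul a).add ((hint y hy).const_mul b)
  calc ∫ ω, f (a • x + b • y) ω ∂μ ≤ ∫ ω, (a * f x ω + b * f y ω) ∂μ :=
        integral_mono_ae (hint _ (hs hx hy ha hb hab)) hcomb hle
    _ = a • ∫ ω, f x ω ∂μ + b • ∫ ω, f y ω ∂μ := by
        rw [integral_add ((hint x hx).const_mul a) ((hint y hy).const_mul b), integral_const_mul,
          integral_const_mul, smul_eq_mul, smul_eq_mul]

theorem integrable_max_sub_zero_rpow {Ω : Type*} [MeasurableSpace Ω] {μ : Measure Ω}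
    [IsFiniteMeasure μ] {p : ℝ} (hp : 0 < p) {f : Ω → ℝ} (hf : AEStronglyMeasurable f μ)
    (hint : Integrable (fun ω => |f ω| ^ p) μ) (y : ℝ) :
    Integrable (fun ω => max (f ω - y) 0 ^ p) μ := by
  have hp' : ENNReal.ofReal p ≠ 0 := by simpa using hp
  have hf : MemLp f (ENNReal.ofReal p) μ := by
    rw [← integrable_norm_rpow_iff hf hp' ENNReal.ofReal_ne_top, ENNReal.toReal_ofReal hp.le]
    simpa only [Real.norm_eq_abs] using hint
  have hpos := (hf.sub (memLp_const y)).sup (memLp_const 0)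
  refine (hpos.integrable_norm_rpow hp' ENNReal.ofReal_ne_top).congr (ae_of_all _ fun ω => ?_)
  simp [ENNReal.toReal_ofReal hp.le, abs_of_nonneg (le_max_right (f ω - y) 0)]

/-- Joint convexity of the order-`p` lifted objective
`φ(x, y, z) = (c/z^{p−1})·E[(F(x,·) − y)₊^p] + y + c(p−1)p^{−p/(p−1)}·z`
on `X × ℝ × (0, ∞)`. -/
theorem stmt_18 {n : ℕ} {Ω : Type*} [MeasurableSpace Ω] (P : Measure Ω)
    [IsProbabilityMeasure P]
    (p : ℝ) (hp : 1 < p)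
    (X : Set (Fin n → ℝ)) (hX : Convex ℝ X) (c : ℝ) (hc : 0 < c)
    (F : (Fin n → ℝ) → Ω → ℝ)
    (hconv : ∀ᵐ ω ∂P, ConvexOn ℝ X (fun x => F x ω))
    (hmeas : ∀ x ∈ X, AEStronglyMeasurable (F x) P)
    (hLp : ∀ x ∈ X, Integrable (fun ω => |F x ω| ^ p) P) :
    ConvexOn ℝ (X ×ˢ (Set.univ : Set ℝ) ×ˢ Set.Ioi (0 : ℝ))
      (fun q : (Fin n → ℝ) × ℝ × ℝ =>
        (c / q.2.2 ^ (p - 1)) * (∫ ω, (max (F q.1 ω - q.2.1) 0) ^ p ∂P) + q.2.1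
          + c * (p - 1) * p ^ (-(p / (p - 1))) * q.2.2) := by
  set s := X ×ˢ (univ : Set ℝ) ×ˢ Ioi (0 : ℝ)
  have hs : Convex ℝ s := hX.prod (convex_univ.prod (convex_Ioi 0))
  let πy : (Fin n → ℝ) × ℝ × ℝ →ₗ[ℝ] ℝ := LinearMap.fst ℝ ℝ ℝ ∘ₗ LinearMap.snd ℝ _ _
  let πz : (Fin n → ℝ) × ℝ × ℝ →ₗ[ℝ] ℝ := LinearMap.snd ℝ ℝ ℝ ∘ₗ LinearMap.snd ℝ _ _
  have hpointwise : ∀ᵐ ω ∂P, ConvexOn ℝ s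
      (fun q => max (F q.1 ω - q.2.1) 0 ^ p / q.2.2 ^ (p - 1)) := by
    filter_upwards [hconv] with ω hω
    have hF : ConvexOn ℝ s (fun q => F q.1 ω) :=
      (hω.comp_linearMap (LinearMap.fst ℝ _ _)).subset (fun q hq => hq.1) hs
    exact ((hF.sub (πy.concaveOn hs)).sup (convexOn_const 0 hs)).rpow_div_rpow_sub_one hp.le
      (πz.concaveOn hs) (fun q _ => le_max_right _ _) (fun q hq => hq.2.2)
  have hint : ∀ q ∈ s,
      Integrable (fun ω => max (F q.1 ω - q.2.1) 0 ^ p / q.2.2 ^ (p - 1)) P := fun q hq =>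
    (integrable_max_sub_zero_rpow (by linarith) (hmeas _ hq.1) (hLp _ hq.1) _).div_const _
  have hlin := (πy + (c * (p - 1) * p ^ (-(p / (p - 1)))) • πz).convexOn hs
  refine (((ConvexOn.integral hs hpointwise hint).smul hc.le).add hlin).congr fun q _ => ?_
  simp only [Pi.add_apply, integral_div, smul_eq_mul, LinearMap.add_apply, LinearMap.smul_apply,
    LinearMap.comp_apply, LinearMap.fst_apply, LinearMap.snd_apply, πy, πz]
  ring
end
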